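/- arXiv:2512.06402 — 6 statements merged into one kernel-verified Lean document; each statement's English description precedes it below -/
import Mathlib

section
/- Let ω > 0, b ∈ (0,1) and define g(z) = ω·(1 − 1/(b(1−2z)² − 2(z−1)z + 1)) for z ∈ [0,1]. If b > 1/2, then g is strictly increasing on (1/2,1] and strictly decreasing on [0,1/2); hence g is maximized at z ∈ {0,1} and minimized at z = 1/2. If b < 1/2 the converse holds: g is maximized at z = 1/2 and minimized at z ∈ {0,1}. -/
/-!
Since `2 z (1 - z) = (1 - (1 - 2z)²) / 2`, the denominator equals `3/2 + (b - 1/2) (1 - 2z)²`.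
So `g` is `s ↦ ω (1 - 1 / (3/2 + (b - 1/2) s))`, strictly increasing in `s ∈ [0, 1]` when
`b > 1/2` and strictly decreasing when `b < 1/2`, composed with `s = (1 - 2z)²`, which decreases
on `[0, 1/2]` from `1` to `0` and increases back to `1` on `[1/2, 1]`.
-/

open Set

lemma sq_one_sub_two_mul_mem_Icc {z : ℝ} (hz : z ∈ Icc (0 : ℝ) 1) :
    (1 - 2 * z) ^ 2 ∈ Icc (0 : ℝ) 1 :=
  ⟨sq_nonneg _, by nlinarith [hz.1, hz.2]⟩

lemma strictMonoOn_sq_one_sub_two_mul :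
    StrictMonoOn (fun z : ℝ => (1 - 2 * z) ^ 2) (Ici (1 / 2)) := by
  intro x hx y hy hxy
  simp only [mem_Ici] at hx hy
  nlinarith

lemma strictAntiOn_sq_one_sub_two_mul :
    StrictAntiOn (fun z : ℝ => (1 - 2 * z) ^ 2) (Iic (1 / 2)) := by
  intro x hx y hy hxy
  simp only [mem_Iic] at hx hy
  nlinarith

/-- Applied to `toDual ∘ h`, this also covers `h` strictly decreasing on `[0, 1]`. -/
lemma comp_sq_one_sub_two_mul_of_strictMonoOn {β : Type*} [Preorder β] {h : ℝ → β}
    (hh : StrictMonoOn h (Icc 0 1)) :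
    let G : ℝ → β := fun z => h ((1 - 2 * z) ^ 2)
    StrictMonoOn G (Ioc (1 / 2) 1) ∧
    StrictAntiOn G (Ico 0 (1 / 2)) ∧
    (∀ z ∈ Icc (0 : ℝ) 1, G z ≤ G 0 ∧ G z ≤ G 1) ∧
    (∀ z ∈ Icc (0 : ℝ) 1, G (1 / 2) ≤ G z) := by
  have hmaps : ∀ s : Set ℝ, s ⊆ Icc 0 1 → MapsTo (fun z : ℝ => (1 - 2 * z) ^ 2) s (Icc 0 1) :=
    fun s hs z hz => sq_one_sub_two_mul_mem_Icc (hs hz)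
  have hmono := hh.monotoneOn
  refine ⟨?_, ?_, fun z hz => ⟨?_, ?_⟩, fun z hz => ?_⟩
  · exact hh.comp (strictMonoOn_sq_one_sub_two_mul.mono fun z hz => le_of_lt hz.1)
      (hmaps _ fun z hz => ⟨by linarith [hz.1], hz.2⟩)
  · exact hh.comp_strictAntiOn (strictAntiOn_sq_one_sub_two_mul.mono fun z hz => le_of_lt hz.2)
      (hmaps _ fun z hz => ⟨hz.1, by linarith [hz.2]⟩)
  · exact hmono (sq_one_sub_two_mul_mem_Icc hz) (by norm_num)
      ((sq_one_sub_two_mul_mem_Icc hz).2.trans_eq (by norm_num))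
  · exact hmono (sq_one_sub_two_mul_mem_Icc hz) (by norm_num)
      ((sq_one_sub_two_mul_mem_Icc hz).2.trans_eq (by norm_num))
  · exact hmono (by norm_num) (sq_one_sub_two_mul_mem_Icc hz)
      ((sq_one_sub_two_mul_mem_Icc hz).1.trans_eq' (by norm_num))

lemma strictMonoOn_mul_one_sub_one_div {ω : ℝ} (hω : 0 < ω) :
    StrictMonoOn (fun t : ℝ => ω * (1 - 1 / t)) (Ioi 0) := by
  intro x hx y _ hxy
  exact mul_lt_mul_of_pos_left (sub_lt_sub_left (one_div_lt_one_div_of_lt hx hxy) 1) hω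

lemma mapsTo_three_halves_add_mul_Icc {c : ℝ} (hc : -3 / 2 < c) :
    MapsTo (fun s : ℝ => 3 / 2 + c * s) (Icc 0 1) (Ioi 0) := by
  intro s hs
  simp only [mem_Ioi]
  rcases le_total 0 c with hc0 | hc0 <;> nlinarith [hs.1, hs.2]

theorem stmt_5 (ω b : ℝ) (hω : 0 < ω) (hb : b ∈ Set.Ioo (0:ℝ) 1) :
    let g : ℝ → ℝ := fun z =>
      ω * (1 - 1 / (b * (1 - 2*z)^2 - 2 * (z - 1) * z + 1))
    (b > 1/2 →
      StrictMonoOn g (Set.Ioc (1/2 : ℝ) 1) ∧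
      StrictAntiOn g (Set.Ico (0:ℝ) (1/2)) ∧
      (∀ z ∈ Set.Icc (0:ℝ) 1, g z ≤ g 0 ∧ g z ≤ g 1) ∧
      (∀ z ∈ Set.Icc (0:ℝ) 1, g (1/2) ≤ g z)) ∧
    (b < 1/2 →
      StrictAntiOn g (Set.Ioc (1/2 : ℝ) 1) ∧
      StrictMonoOn g (Set.Ico (0:ℝ) (1/2)) ∧
      (∀ z ∈ Set.Icc (0:ℝ) 1, g z ≤ g (1/2)) ∧
      (∀ z ∈ Set.Icc (0:ℝ) 1, g 0 ≤ g z ∧ g 1 ≤ g z)) := by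
  intro g
  set h : ℝ → ℝ := fun s => ω * (1 - 1 / (3 / 2 + (b - 1 / 2) * s))
  have hg : g = fun z => h ((1 - 2 * z) ^ 2) := by
    funext z
    simp only [g, h]
    ring_nf
  rw [hg]
  have hdenom_pos := mapsTo_three_halves_add_mul_Icc (c := b - 1 / 2) (by linarith [hb.1])
  refine ⟨fun hb' => comp_sq_one_sub_two_mul_of_strictMonoOn ?_, fun hb' => ?_⟩
  · refine (strictMonoOn_mul_one_sub_one_div hω).comp ?_ hdenom_pos
    exact (strictMono_mul_left_of_pos (by linarith)).const_add _ |>.strictMonoOn _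
  · have h_anti : StrictAntiOn h (Icc 0 1) :=
      (strictMonoOn_mul_one_sub_one_div hω).comp_strictAntiOn
        ((strictAnti_mul_left (by linarith)).const_add _ |>.strictAntiOn _) hdenom_pos
    obtain ⟨h_anti_right, h_mono_left, h_min_ends, h_max_mid⟩ :=
      comp_sq_one_sub_two_mul_of_strictMonoOn h_anti.dual_right
    exact ⟨h_anti_right, h_mono_left, h_max_mid, h_min_ends⟩
end

section
/- Let γ, μ > 0, σ > 1, λ > 0, b ∈ (0,1), φ ∈ (0,1), and define Ω(φ) = γ((b−1)(λ+2)φ² + 2b(λ+1)φ + (b−1)λ)/(2σφ) − ln φ/(σ−1). If b > b_s(φ) := ((λ+2)φ² + λ)/((φ+1)((λ+2)φ + λ)), then Ω(φ) > 0. -/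
/-! The spillover numerator equals `b · D − A`, where `b_s = A / D` with `D = (φ+1)((λ+2)φ+λ) > 0`,
so `b > b_s` makes the first term of `Ω` positive; the second term `−ln φ/(σ−1)` is positive
because `φ < 1 < σ`. -/

lemma spillover_numerator_eq (lam b φ : ℝ) :
    (b - 1) * (lam + 2) * φ^2 + 2 * b * (lam + 1) * φ + (b - 1) * lam
      = b * ((φ + 1) * ((lam + 2) * φ + lam)) - ((lam + 2) * φ^2 + lam) := by
  ring

lemma spillover_numerator_pos {lam b φ : ℝ} (hlam : 0 < lam) (hφ : 0 < φ)
    (hbs : b > ((lam + 2) * φ^2 + lam) / ((φ + 1) * ((lam + 2) * φ + lam))) :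
    0 < (b - 1) * (lam + 2) * φ^2 + 2 * b * (lam + 1) * φ + (b - 1) * lam := by
  have hD : 0 < (φ + 1) * ((lam + 2) * φ + lam) := by positivity
  rw [spillover_numerator_eq, sub_pos]
  exact (div_lt_iff₀ hD).mp hbs

lemma neg_log_div_pos {σ φ : ℝ} (hσ : 1 < σ) (hφ : φ ∈ Set.Ioo (0:ℝ) 1) :
    0 < -Real.log φ / (σ - 1) :=
  div_pos (neg_pos.mpr (Real.log_neg hφ.1 hφ.2)) (sub_pos.mpr hσ)

theorem stmt_7_general (γ σ lam b φ : ℝ) (hγ : 0 < γ) (hσ : 1 < σ)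
    (hlam : 0 < lam) (hφ : φ ∈ Set.Ioo (0:ℝ) 1)
    (hbs : b > ((lam + 2) * φ^2 + lam) / ((φ + 1) * ((lam + 2) * φ + lam))) :
    γ * ((b - 1) * (lam + 2) * φ^2 + 2 * b * (lam + 1) * φ + (b - 1) * lam)
        / (2 * σ * φ) - Real.log φ / (σ - 1) > 0 := by
  have hσ0 : 0 < σ := one_pos.trans hσ
  have hspill : 0 < γ * ((b - 1) * (lam + 2) * φ^2 + 2 * b * (lam + 1) * φ + (b - 1) * lam)
      / (2 * σ * φ) :=
    div_pos (mul_pos hγ (spillover_numerator_pos hlam hφ.1 hbs)) (by have := hφ.1; positivity)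
  have hlog := neg_log_div_pos hσ hφ
  rw [neg_div] at hlog
  linarith

theorem stmt_7 (γ μ σ lam b φ : ℝ) (hγ : 0 < γ) (hμ : 0 < μ) (hσ : 1 < σ)
    (hlam : 0 < lam) (hb : b ∈ Set.Ioo (0:ℝ) 1) (hφ : φ ∈ Set.Ioo (0:ℝ) 1)
    (hbs : b > ((lam + 2) * φ^2 + lam) / ((φ + 1) * ((lam + 2) * φ + lam))) :
    γ * ((b - 1) * (lam + 2) * φ^2 + 2 * b * (lam + 1) * φ + (b - 1) * lam)
        / (2 * σ * φ) - Real.log φ / (σ - 1) > 0 :=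
  stmt_7_general γ σ lam b φ hγ hσ hlam hφ hbs
end

section
/- Let φ ∈ (0,1) and z ∈ (1/2, 1]. Define b̲(z,φ) = ((z−1)z(φ²−1) + φ²) / (2(z−1)z(φ²−1) + φ(φ+1)). Then 0 < b̲(z,φ) < (φ²+1)/(φ+1)². -/
/-!
Writing `w = (z - 1) z (φ² - 1) = z (1 - z) (1 - φ²) ≥ 0`, the threshold is
`(w + φ²) / (2w + φ(φ + 1))`, a quotient of positive numbers. Cross-multiplying the upper bound,
`(φ² + 1)(2w + φ(φ + 1)) - (w + φ²)(φ + 1)² = w (1 - φ)² + φ (1 + φ)(1 - φ) > 0`.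
-/

lemma sub_one_mul_self_mul_sq_sub_one_nonneg {z φ : ℝ} (hz₀ : 0 ≤ z) (hz₁ : z ≤ 1)
    (hφ : φ ^ 2 ≤ 1) : 0 ≤ (z - 1) * z * (φ ^ 2 - 1) :=
  mul_nonneg_of_nonpos_of_nonpos (mul_nonpos_of_nonpos_of_nonneg (by linarith) hz₀)
    (by linarith)

lemma threshold_pos {φ w : ℝ} (hφ : 0 < φ) (hw : 0 ≤ w) :
    0 < (w + φ ^ 2) / (2 * w + φ * (φ + 1)) := by
  positivity

lemma threshold_lt {φ w : ℝ} (hφ₀ : 0 < φ) (hφ₁ : φ < 1) (hw : 0 ≤ w) :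
    (w + φ ^ 2) / (2 * w + φ * (φ + 1)) < (φ ^ 2 + 1) / (φ + 1) ^ 2 := by
  rw [div_lt_div_iff₀ (by positivity) (by positivity)]
  have gap : (φ ^ 2 + 1) * (2 * w + φ * (φ + 1)) - (w + φ ^ 2) * (φ + 1) ^ 2
      = w * (1 - φ) ^ 2 + φ * (1 + φ) * (1 - φ) := by ring
  have : 0 < φ * (1 + φ) * (1 - φ) := by
    have : 0 < 1 - φ := by linarith
    positivity
  linarith [mul_nonneg hw (sq_nonneg (1 - φ))]

theorem stmt_13 (φ z : ℝ) (hφ : φ ∈ Set.Ioo (0:ℝ) 1) (hz : z ∈ Set.Ioc (1/2 : ℝ) 1) :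
    0 < ((z - 1) * z * (φ^2 - 1) + φ^2) /
        (2 * (z - 1) * z * (φ^2 - 1) + φ * (φ + 1)) ∧
    ((z - 1) * z * (φ^2 - 1) + φ^2) /
        (2 * (z - 1) * z * (φ^2 - 1) + φ * (φ + 1)) < (φ^2 + 1) / (φ + 1)^2 := by
  obtain ⟨hφ₀, hφ₁⟩ := hφ
  obtain ⟨hz₀, hz₁⟩ := hz
  have hw : 0 ≤ (z - 1) * z * (φ ^ 2 - 1) :=
    sub_one_mul_self_mul_sq_sub_one_nonneg (by linarith) hz₁ (by nlinarith)
  rw [show 2 * (z - 1) * z * (φ ^ 2 - 1) = 2 * ((z - 1) * z * (φ ^ 2 - 1)) by ring]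
  exact ⟨threshold_pos hφ₀ hw, threshold_lt hφ₀ hφ₁ hw⟩
end

section
/- Let φ ∈ (0,1), z ∈ (1/2, 1). Define N(z,φ) = (2z−1)(φ²−1)[2z²(φ−1)² − 2z(φ−1)² + φ² + 1] − 4[z(φ−1)+1]²[z(1−φ)+φ]²·ln((z(φ−1)+1)/(z(1−φ)+φ)). Then N(1/2, φ) = 0 and ∂N/∂z < 0 for z ∈ (1/2,1); hence N(z,φ) < 0 for all z ∈ (1/2,1). -/
/-!
With `a = z(φ-1)+1` and `b = z(1-φ)+φ` one has `a = b` at `z = 1/2`, so `N(1/2) = 0`, and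
`∂N/∂z = -4(1-φ)³(1+φ)(2z-1)² + 8(1-φ)²(2z-1)·a·b·log(a/b)`.
For `z ∈ (1/2, 1)` both `a, b` are positive and `a < b`, so both summands are negative.
Hence `N` is strictly decreasing on `[1/2, 1)` and negative on `(1/2, 1)`.
-/

open Real Set

namespace StabilityThreshold

noncomputable def numerator (φ : ℝ) : ℝ → ℝ := fun z =>
  (2*z - 1) * (φ^2 - 1) * (2*z^2 * (φ - 1)^2 - 2*z * (φ - 1)^2 + φ^2 + 1)
  - 4 * (z * (φ - 1) + 1)^2 * (z * (1 - φ) + φ)^2 *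
      log ((z * (φ - 1) + 1) / (z * (1 - φ) + φ))

theorem numerator_half (φ : ℝ) (hφ : φ ≠ -1) : numerator φ (1/2) = 0 := by
  have hb : (1/2 : ℝ) * (1 - φ) + φ ≠ 0 := fun h => hφ (by linarith)
  rw [numerator, show (1/2 : ℝ) * (φ - 1) + 1 = 1/2 * (1 - φ) + φ by ring, div_self hb, log_one]
  ring

theorem hasDerivAt_numerator {φ z : ℝ} (ha : z * (φ - 1) + 1 ≠ 0) (hb : z * (1 - φ) + φ ≠ 0) :
    HasDerivAt (numerator φ)
      (-4 * (1 - φ)^3 * (1 + φ) * (2*z - 1)^2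
        + 8 * (1 - φ)^2 * (2*z - 1) * ((z * (φ - 1) + 1) * (z * (1 - φ) + φ)) *
          log ((z * (φ - 1) + 1) / (z * (1 - φ) + φ))) z := by
  have hA : HasDerivAt (fun z : ℝ => z * (φ - 1) + 1) (φ - 1) z := by
    simpa using ((hasDerivAt_id z).mul_const (φ - 1)).add_const 1
  have hB : HasDerivAt (fun z : ℝ => z * (1 - φ) + φ) (1 - φ) z := by
    simpa using ((hasDerivAt_id z).mul_const (1 - φ)).add_const φ
  have hZ : HasDerivAt (fun z : ℝ => z) 1 z := hasDerivAt_id z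
  have hPoly := (((hZ.const_mul 2).sub_const 1).mul_const (φ^2 - 1)).fun_mul
    (((((hZ.fun_pow 2).const_mul 2).mul_const ((φ - 1)^2)).fun_sub
      ((hZ.const_mul 2).mul_const ((φ - 1)^2))).add_const (φ^2) |>.add_const 1)
  have hLog := (((hA.fun_pow 2).const_mul 4).fun_mul (hB.fun_pow 2)).fun_mul
    ((hA.fun_div hB hb).log (div_ne_zero ha hb))
  refine (hPoly.fun_sub hLog).congr_deriv ?_
  field_simp
  ring

theorem numerator_factors_pos {φ z : ℝ} (hφ : φ ∈ Ioo (0 : ℝ) 1) (hz : z ∈ Ico (1/2 : ℝ) 1) :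
    0 < z * (φ - 1) + 1 ∧ 0 < z * (1 - φ) + φ := by
  obtain ⟨hφ0, hφ1⟩ := hφ
  obtain ⟨hz0, hz1⟩ := hz
  constructor <;> nlinarith

theorem deriv_numerator_neg {φ z : ℝ} (hφ : φ ∈ Ioo (0 : ℝ) 1) (hz : z ∈ Ioo (1/2 : ℝ) 1) :
    deriv (numerator φ) z < 0 := by
  obtain ⟨ha, hb⟩ := numerator_factors_pos hφ (Ioo_subset_Ico_self hz)
  rw [(hasDerivAt_numerator ha.ne' hb.ne').deriv]
  have hφ1 : 0 < 1 - φ := sub_pos.2 hφ.2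
  have h1φ : 0 < 1 + φ := by linarith [hφ.1]
  have h2z : 0 < 2*z - 1 := by linarith [hz.1]
  have hlog : log ((z * (φ - 1) + 1) / (z * (1 - φ) + φ)) < 0 := by
    refine log_neg (by positivity) ((div_lt_one hb).2 ?_)
    nlinarith [hz.1]
  have hfirst : 0 < 4 * (1 - φ)^3 * (1 + φ) * (2*z - 1)^2 := by positivity
  have hsecond : 0 < 8 * (1 - φ)^2 * (2*z - 1) * ((z * (φ - 1) + 1) * (z * (1 - φ) + φ)) := by
    positivity
  linarith [mul_neg_of_pos_of_neg hsecond hlog]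

theorem strictAntiOn_numerator {φ : ℝ} (hφ : φ ∈ Ioo (0 : ℝ) 1) :
    StrictAntiOn (numerator φ) (Ico (1/2 : ℝ) 1) := by
  refine strictAntiOn_of_deriv_neg (convex_Ico _ _) (fun z hz => ?_) ?_
  · obtain ⟨ha, hb⟩ := numerator_factors_pos hφ hz
    exact (hasDerivAt_numerator ha.ne' hb.ne').continuousAt.continuousWithinAt
  · rw [interior_Ico]
    exact fun z hz => deriv_numerator_neg hφ hz

end StabilityThreshold

open StabilityThreshold in
theorem stmt_15 (φ : ℝ) (hφ : φ ∈ Set.Ioo (0:ℝ) 1) :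
    let N : ℝ → ℝ := fun z =>
      (2*z - 1) * (φ^2 - 1) * (2*z^2 * (φ - 1)^2 - 2*z * (φ - 1)^2 + φ^2 + 1)
      - 4 * (z * (φ - 1) + 1)^2 * (z * (1 - φ) + φ)^2 *
          Real.log ((z * (φ - 1) + 1) / (z * (1 - φ) + φ))
    N (1/2) = 0 ∧
    (∀ z ∈ Set.Ioo (1/2 : ℝ) 1, deriv N z < 0) ∧
    (∀ z ∈ Set.Ioo (1/2 : ℝ) 1, N z < 0) := by
  show numerator φ (1/2) = 0 ∧ (∀ z ∈ Ioo (1/2 : ℝ) 1, deriv (numerator φ) z < 0) ∧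
    ∀ z ∈ Ioo (1/2 : ℝ) 1, numerator φ z < 0
  have hzero := numerator_half φ (by linarith [hφ.1])
  refine ⟨hzero, fun z hz => deriv_numerator_neg hφ hz, fun z hz => ?_⟩
  rw [← hzero]
  exact strictAntiOn_numerator hφ (left_mem_Ico.2 (by norm_num)) (Ioo_subset_Ico_self hz) hz.1
end

section
/- Let σ > 1 and λ > σ/(σ−1). Define φ_b^g = (2(λ+1)(σ−1) − √(4σ² + 4(σ−1)² + 8σ(σ−1))) / ((2λ+4)(σ−1) + 2σ). Then φ_b^g ∈ (0,1). (Note the square root simplifies: 4σ² + 4(σ−1)² + 8σ(σ−1) = 4(2σ−1)², so φ_b^g = ((λ+1)(σ−1) − (2σ−1))/((λ+2)(σ−1) + σ).) -/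
/-! The discriminant is the perfect square `(4σ - 2)²`, which yields the closed form. Writing
`x = λ(σ - 1)`, that closed form is `(x - σ) / ((x - σ) + (4σ - 2))`: its numerator is positive
exactly by the no-black-hole condition and is smaller than its denominator because `σ > 1/2`. -/

theorem sqrt_breakPoint_discriminant {σ : ℝ} (hσ : 1 / 2 ≤ σ) :
    Real.sqrt (4 * σ ^ 2 + 4 * (σ - 1) ^ 2 + 8 * σ * (σ - 1)) = 4 * σ - 2 := by
  rw [show 4 * σ ^ 2 + 4 * (σ - 1) ^ 2 + 8 * σ * (σ - 1) = (4 * σ - 2) ^ 2 by ring]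
  exact Real.sqrt_sq (by linarith)

theorem breakPoint_closedForm_mem_Ioo {σ lam : ℝ} (hσ : 1 / 2 < σ) (hlam : σ < lam * (σ - 1)) :
    ((lam + 1) * (σ - 1) - (2 * σ - 1)) / ((lam + 2) * (σ - 1) + σ) ∈ Set.Ioo (0 : ℝ) 1 := by
  have hnum : 0 < (lam + 1) * (σ - 1) - (2 * σ - 1) := by linarith
  have hgap : (lam + 1) * (σ - 1) - (2 * σ - 1) < (lam + 2) * (σ - 1) + σ := by linarith
  exact ⟨div_pos hnum (hnum.trans hgap), (div_lt_one (hnum.trans hgap)).mpr hgap⟩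

theorem stmt_17 (σ lam : ℝ) (hσ : 1 < σ) (hlam : lam > σ / (σ - 1)) :
    let φbg : ℝ :=
      (2 * (lam + 1) * (σ - 1) -
        Real.sqrt (4 * σ^2 + 4 * (σ - 1)^2 + 8 * σ * (σ - 1)))
      / ((2*lam + 4) * (σ - 1) + 2 * σ)
    φbg ∈ Set.Ioo (0:ℝ) 1 ∧
    φbg = ((lam + 1) * (σ - 1) - (2 * σ - 1)) / ((lam + 2) * (σ - 1) + σ) := by
  intro φbg
  have hσ_sub : 0 < σ - 1 := by linarith
  have hlam' : σ < lam * (σ - 1) := (div_lt_iff₀ hσ_sub).mp hlam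
  have hclosed : φbg = ((lam + 1) * (σ - 1) - (2 * σ - 1)) / ((lam + 2) * (σ - 1) + σ) := by
    simp only [φbg, sqrt_breakPoint_discriminant (by linarith : 1 / 2 ≤ σ)]
    rw [show (2 * lam + 4) * (σ - 1) + 2 * σ = 2 * ((lam + 2) * (σ - 1) + σ) by ring,
      show 2 * (lam + 1) * (σ - 1) - (4 * σ - 2) = 2 * ((lam + 1) * (σ - 1) - (2 * σ - 1)) by ring,
      mul_div_mul_left _ _ two_ne_zero]
  exact ⟨hclosed ▸ breakPoint_closedForm_mem_Ioo (by linarith) hlam', hclosed⟩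
end

section
/- Let γ, μ > 0, σ > 1, λ > 0, φ ∈ (0,1), z ∈ (1/2, 1). Then the derivative of the indirect utility differential with respect to b, ∂Δv/∂b = γμ(2z−1)(φ+1)(λ − 4z² + φ(λ + 4(z−1)z + 2) + 4z) / (2σ(z(φ−1)+1)(z(1−φ)+φ)), is strictly positive. -/
/-!
Every factor is positive. For the last factor of the numerator, write `u = 4 z (1 - z)`, so that
`lam - 4 z² + φ (lam + 4 (z - 1) z + 2) + 4 z = lam (1 + φ) + u (1 - φ) + 2 φ`; the two factors of
the denominator are the convex combinations `(1 - z) + z φ` and `z + (1 - z) φ` of `1` and `φ`.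
-/

namespace UtilityDifferential

variable {lam φ z : ℝ}

lemma agglomeration_factor_pos (hlam : 0 < lam) (hφ0 : 0 ≤ φ) (hφ1 : φ ≤ 1)
    (hz0 : 0 ≤ z) (hz1 : z ≤ 1) :
    0 < lam - 4 * z ^ 2 + φ * (lam + 4 * (z - 1) * z + 2) + 4 * z := by
  have hu : 0 ≤ 4 * z * (1 - z) * (1 - φ) := by
    have := mul_nonneg hz0 (sub_nonneg.2 hz1)
    have := sub_nonneg.2 hφ1
    positivity
  have hidentity : lam - 4 * z ^ 2 + φ * (lam + 4 * (z - 1) * z + 2) + 4 * z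
      = lam * (1 + φ) + 4 * z * (1 - z) * (1 - φ) + 2 * φ := by ring
  rw [hidentity]
  nlinarith

lemma mul_sub_one_add_one_pos (hφ : 0 ≤ φ) (hz0 : 0 ≤ z) (hz1 : z < 1) :
    0 < z * (φ - 1) + 1 := by
  nlinarith [mul_nonneg hz0 hφ]

lemma mul_one_sub_add_pos (hφ : 0 ≤ φ) (hz0 : 0 < z) (hz1 : z ≤ 1) :
    0 < z * (1 - φ) + φ := by
  nlinarith [mul_nonneg (sub_nonneg.2 hz1) hφ]

end UtilityDifferential

open UtilityDifferential in
theorem stmt_19 (γ μ σ lam φ z : ℝ) (hγ : 0 < γ) (hμ : 0 < μ) (hσ : 1 < σ)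
    (hlam : 0 < lam) (hφ : φ ∈ Set.Ioo (0:ℝ) 1) (hz : z ∈ Set.Ioo (1/2 : ℝ) 1) :
    γ * μ * (2*z - 1) * (φ + 1) *
        (lam - 4*z^2 + φ * (lam + 4 * (z - 1) * z + 2) + 4*z)
      / (2 * σ * (z * (φ - 1) + 1) * (z * (1 - φ) + φ)) > 0 := by
  obtain ⟨hφ0, hφ1⟩ := hφ
  obtain ⟨hz_half, hz1⟩ := hz
  have hz0 : 0 ≤ z := by linarith
  have h2z : 0 < 2 * z - 1 := by linarith
  have hσ0 : 0 < σ := by linarith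
  have hfactor := agglomeration_factor_pos hlam hφ0.le hφ1.le hz0 hz1.le
  have hden₁ := mul_sub_one_add_one_pos hφ0.le hz0 hz1
  have hden₂ := mul_one_sub_add_pos hφ0.le (by linarith) hz1.le
  positivity
end
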